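/- Let Y := ⨆_{n∈ℤ} Y_n, where Y_n is the space of half-infinite reduced words indexed from n, with measure μ_Y := Σ_{n∈ℤ} 3^{−n} μ_n (each μ_n the natural Markov probability measure). Then the left-multiplication action of F₂ on Y (formal left multiplication by g followed by cancellation, mapping Y_n into Y_{n−|g|'} for the appropriate index) is measure-preserving: each generator shift S_s preserves μ_Y. -/

import Mathlib

/-!
On words beginning with `s⁻¹`, `S_s` deletes the first letter and moves from level `n` to
level `n + 1`. For a Markov measure, deleting a first letter `l` carries `μ` restricted to
`{w₀ = l}` to `3⁻¹ μ` restricted to `{w₀ ≠ l⁻¹}` (compare cylinders), and `3⁻¹` is exactly the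
ratio of the weights `3^{-(n+1)}` and `3^{-n}`. Hence `S_s` maps `μ_Y|{w₀ = s⁻¹}` onto
`μ_Y|{w₀ ≠ s}`. On the other piece `{w₀ ≠ s⁻¹}`, `S_s` inverts `S_{s⁻¹}`, so the same fact for
`s⁻¹` shows that it maps `μ_Y|{w₀ ≠ s⁻¹}` onto `μ_Y|{w₀ = s}`; the two images add up to `μ_Y`.
-/

open MeasureTheory
/-- The four-letter alphabet `{a, b, a⁻¹, b⁻¹}`. -/
inductive Letter : Type
  | a | b | a' | b'
  deriving DecidableEq

instance : Fintype Letter := ⟨{.a, .b, .a', .b'}, fun x => by cases x <;> simp⟩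

instance : MeasurableSpace Letter := ⊤

/-- Formal inverse of a letter. -/
def Letter.inv : Letter → Letter
  | .a => .a' | .a' => .a | .b => .b' | .b' => .b

@[simp] theorem Letter.inv_inv (l : Letter) : l.inv.inv = l := by cases l <;> rfl

/-- The space of half-infinite reduced words: sequences of letters in which a letter is
never followed by its inverse. -/
def RWord : Type := {s : ℕ → Letter // ∀ m, s (m + 1) ≠ (s m).inv}

instance : MeasurableSpace RWord := by unfold RWord; infer_instance

/-- A measure on the space of half-infinite reduced words is a *Markov measure* if every
cylinder set given by a reduced word of length `k+1` has measure `1/(4·3^k)`: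
the first letter is uniform on the four letters and each subsequent letter is uniform
on the three letters not inverse to its predecessor. -/
def IsMarkovMeasure (μ : MeasureTheory.Measure RWord) : Prop :=
  MeasureTheory.IsProbabilityMeasure μ ∧
  ∀ (k : ℕ) (w : Fin (k + 1) → Letter),
    (∀ i : Fin k, w i.succ ≠ (w i.castSucc).inv) →
    μ {s : RWord | ∀ i : Fin (k + 1), s.1 i = w i} = ((4 * 3 ^ k : ℕ) : ENNReal)⁻¹

/-- Deletion of the first letter of a reduced word. -/
def tailWord (s : RWord) : RWord := ⟨fun m => s.1 (m + 1), fun m => s.2 (m + 1)⟩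

/-- Prepending a letter `s` to a reduced word `w` with `w₀ ≠ s⁻¹`. -/
def consWord (s : Letter) (w : RWord) (h : ¬ w.1 0 = s.inv) : RWord :=
  ⟨fun m => match m with | 0 => s | (m + 1) => w.1 m, by
    intro m
    match m with
    | 0 => exact h
    | (m + 1) => exact w.2 m⟩

/-- The model of `Y = ⨆_{n ∈ ℤ} Y_n`: a point of `Y_n` is a pair `(n, w)` where `w` is the
reduced word `s_n s_{n+1} …` reindexed from `0`. -/
abbrev YSpace : Type := ℤ × RWord

/-- The measure `μ_Y = Σ_{n ∈ ℤ} 3^{−n} μ_n` on `Y = ⨆_n Y_n`, where each `μ_n` is a copy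
of the Markov measure `μW`. -/
noncomputable def muY (μW : Measure RWord) : Measure YSpace :=
  Measure.sum fun n : ℤ => (3 : ENNReal) ^ (-n) • (Measure.map (Prod.mk n) μW)

/-- Formal left multiplication by a generator `s`: prepend `s` (moving `Y_n → Y_{n−1}`)
unless the first letter is `s⁻¹`, in which case delete it (moving `Y_n → Y_{n+1}`). -/
def shiftS (s : Letter) (p : YSpace) : YSpace :=
  if h : p.2.1 0 = s.inv then (p.1 + 1, tailWord p.2)
  else (p.1 - 1, consWord s p.2 h)

open scoped ENNReal

namespace RWord

lemma measurable_apply (i : ℕ) : Measurable fun x : RWord => x.1 i :=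
  (measurable_pi_apply i).comp measurable_subtype_coe

lemma measurable_tailWord : Measurable tailWord :=
  Measurable.subtype_mk (measurable_pi_lambda _ fun m => measurable_apply (m + 1))

def prefixSet {n : ℕ} (w : Fin n → Letter) : Set RWord := {x | ∀ i : Fin n, x.1 i = w i}

def headSet (l : Letter) : Set RWord := {x | x.1 0 = l}

@[simp] lemma prefixSet_zero (w : Fin 0 → Letter) : prefixSet w = Set.univ := by
  ext x; simp [prefixSet]

lemma measurableSet_prefixSet {n : ℕ} (w : Fin n → Letter) : MeasurableSet (prefixSet w) := by
  have : prefixSet w = ⋂ i : Fin n, (fun x : RWord => x.1 i) ⁻¹' {w i} := by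
    ext x; simp [prefixSet]
  rw [this]
  exact .iInter fun i => measurable_apply i (measurableSet_singleton _)

lemma measurableSet_headSet (l : Letter) : MeasurableSet (headSet l) :=
  measurable_apply 0 (measurableSet_singleton l)

lemma preimage_apply_eq_iUnion_prefixSet (i : ℕ) (l : Letter) :
    (fun x : RWord => x.1 i) ⁻¹' {l} = ⋃ w : Fin i → Letter, prefixSet (Fin.snoc w l) := by
  ext x
  simp only [Set.mem_preimage, Set.mem_singleton_iff, Set.mem_iUnion, prefixSet,
    Set.mem_ofPred_eq, Fin.forall_fin_succ', Fin.snoc_castSucc, Fin.snoc_last, Fin.val_castSucc,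
    Fin.val_last]
  exact ⟨fun h => ⟨fun j => x.1 j, fun _ => rfl, h⟩, fun ⟨_, _, h⟩ => h⟩

lemma prefixSet_inter_eq_right {n m : ℕ} {w : Fin n → Letter} {v : Fin m → Letter} (h : n ≤ m)
    (hne : (prefixSet w ∩ prefixSet v).Nonempty) : prefixSet w ∩ prefixSet v = prefixSet v := by
  obtain ⟨x, hxw, hxv⟩ := hne
  refine Set.inter_eq_self_of_subset_right fun y hy i => ?_
  have hi : (i : ℕ) < m := i.2.trans_le h
  rw [← hxw i, (hy ⟨i, hi⟩ : y.1 i = _), ← hxv ⟨i, hi⟩]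

lemma isPiSystem_prefixSets :
    IsPiSystem {S : Set RWord | ∃ (n : ℕ) (w : Fin n → Letter), S = prefixSet w} := by
  rintro _ ⟨n, w, rfl⟩ _ ⟨m, v, rfl⟩ hne
  rcases le_total n m with h | h
  · exact ⟨m, v, prefixSet_inter_eq_right h hne⟩
  · rw [Set.inter_comm] at hne ⊢
    exact ⟨n, w, prefixSet_inter_eq_right h hne⟩

lemma generateFrom_prefixSets :
    (inferInstance : MeasurableSpace RWord) =
      MeasurableSpace.generateFrom {S | ∃ (n : ℕ) (w : Fin n → Letter), S = prefixSet w} := by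
  set G := MeasurableSpace.generateFrom {S | ∃ (n : ℕ) (w : Fin n → Letter), S = prefixSet w}
  refine le_antisymm ?_ (MeasurableSpace.generateFrom_le ?_)
  · have hcoord (i : ℕ) (l : Letter) : MeasurableSet[G] ((fun x : RWord => x.1 i) ⁻¹' {l}) := by
      rw [preimage_apply_eq_iUnion_prefixSet]
      exact .iUnion fun w => MeasurableSpace.measurableSet_generateFrom ⟨_, _, rfl⟩
    exact ((@measurable_pi_iff RWord ℕ (fun _ => Letter) G _ Subtype.val).2
      fun i => @measurable_to_countable' Letter RWord _ _ G _ (hcoord i)).comap_le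
  · rintro _ ⟨n, w, rfl⟩
    exact measurableSet_prefixSet w

lemma ext_of_prefixSet {μ ν : Measure RWord} [IsFiniteMeasure μ]
    (h : ∀ n (w : Fin n → Letter), μ (prefixSet w) = ν (prefixSet w)) : μ = ν :=
  ext_of_generate_finite _ generateFrom_prefixSets isPiSystem_prefixSets
    (by rintro _ ⟨n, w, rfl⟩; exact h n w) (by simpa using h 0 Fin.elim0)

lemma prefixSet_eq_empty {k : ℕ} {w : Fin (k + 1) → Letter}
    (h : ∃ i : Fin k, w i.succ = (w i.castSucc).inv) : prefixSet w = ∅ := by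
  obtain ⟨i, hi⟩ := h
  exact Set.eq_empty_of_forall_notMem fun x hx =>
    x.2 i ((hx i.succ).trans (hi.trans (congrArg Letter.inv (hx i.castSucc).symm)))

lemma preimage_tailWord_prefixSet_inter_headSet {n : ℕ} (w : Fin n → Letter) (l : Letter) :
    tailWord ⁻¹' prefixSet w ∩ headSet l = prefixSet (Fin.cons l w : Fin (n + 1) → Letter) := by
  ext x
  simp [prefixSet, headSet, tailWord, Fin.forall_fin_succ, and_comm]

lemma headSet_eq_prefixSet (l : Letter) (w : Fin 0 → Letter) :
    headSet l = prefixSet (Fin.cons l w : Fin 1 → Letter) := by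
  ext x; simp [headSet, prefixSet]

lemma prefixSet_subset_headSet {k : ℕ} (w : Fin (k + 1) → Letter) :
    prefixSet w ⊆ headSet (w 0) :=
  fun _ hx => hx 0

end RWord

namespace IsMarkovMeasure

open RWord

variable {μ : Measure RWord}

lemma measure_headSet (hμ : IsMarkovMeasure μ) (l : Letter) :
    μ (headSet l) = 4⁻¹ := by
  rw [headSet_eq_prefixSet l Fin.elim0, prefixSet, hμ.2 0 _ fun i => i.elim0]
  norm_num

lemma measure_compl_headSet (hμ : IsMarkovMeasure μ) (l : Letter) :
    μ (headSet l)ᶜ = 3 * 4⁻¹ := by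
  have := hμ.1
  rw [prob_compl_eq_one_sub (measurableSet_headSet l), hμ.measure_headSet]
  refine ENNReal.sub_eq_of_eq_add (by simp) ?_
  rw [← add_one_mul, show (3 : ℝ≥0∞) + 1 = 4 by norm_num, ENNReal.mul_inv_cancel] <;> norm_num

lemma measure_prefixSet_cons (hμ : IsMarkovMeasure μ) (l : Letter) {k : ℕ}
    (w : Fin (k + 1) → Letter) (hw : w 0 ≠ l.inv) :
    μ (prefixSet (Fin.cons l w : Fin (k + 2) → Letter)) = 3⁻¹ * μ (prefixSet w) := by
  by_cases hred : ∀ i : Fin k, w i.succ ≠ (w i.castSucc).inv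
  · have hred' : ∀ i : Fin (k + 1),
        (Fin.cons l w : Fin (k + 2) → Letter) i.succ ≠
          ((Fin.cons l w : Fin (k + 2) → Letter) i.castSucc).inv := by
      refine Fin.cases (by simpa using hw) fun i => ?_
      simpa [← Fin.succ_castSucc] using hred i
    rw [prefixSet, prefixSet, hμ.2 _ _ hred', hμ.2 _ _ hred,
      ← ENNReal.mul_inv (by simp) (by simp)]
    congr 1
    push_cast
    ring
  · simp only [not_forall, not_not] at hred
    obtain ⟨i, hi⟩ := hred
    rw [prefixSet_eq_empty ⟨i, hi⟩, prefixSet_eq_empty ⟨i.succ, by simpa [← Fin.succ_castSucc]⟩]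
    simp

lemma map_tailWord_restrict_headSet (hμ : IsMarkovMeasure μ) (l : Letter) :
    (μ.restrict (headSet l)).map tailWord = (3 : ℝ≥0∞)⁻¹ • μ.restrict (headSet l.inv)ᶜ := by
  have := hμ.1
  refine ext_of_prefixSet fun n w => ?_
  rw [Measure.map_apply measurable_tailWord (measurableSet_prefixSet w),
    Measure.restrict_apply (measurable_tailWord (measurableSet_prefixSet w)),
    preimage_tailWord_prefixSet_inter_headSet, Measure.smul_apply, smul_eq_mul,
    Measure.restrict_apply (measurableSet_prefixSet w)]
  cases n with
  | zero =>
    rw [← headSet_eq_prefixSet, prefixSet_zero, Set.univ_inter, hμ.measure_headSet,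
      hμ.measure_compl_headSet, ENNReal.inv_mul_cancel_left] <;> norm_num
  | succ k =>
    by_cases hw : w 0 = l.inv
    · have hsub : prefixSet w ⊆ headSet l.inv := hw ▸ prefixSet_subset_headSet w
      rw [prefixSet_eq_empty ⟨0, by simpa using hw⟩,
        (Set.disjoint_compl_right_iff_subset.2 hsub).inter_eq]
      simp
    · have hsub : prefixSet w ⊆ (headSet l.inv)ᶜ := fun x hx h => hw ((hx 0).symm.trans h)
      rw [Set.inter_eq_left.2 hsub, hμ.measure_prefixSet_cons l w hw]

end IsMarkovMeasure

section Y

open RWord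

lemma restrict_muY_snd_preimage (μ : Measure RWord) {S : Set RWord} (hS : MeasurableSet S) :
    (muY μ).restrict (Prod.snd ⁻¹' S) = muY (μ.restrict S) := by
  rw [muY, muY, Measure.restrict_sum _ (measurable_snd hS)]
  congr 1
  funext n
  rw [Measure.restrict_smul, Measure.restrict_map measurable_prodMk_left (measurable_snd hS)]
  rfl

lemma map_prodMap_add_one_muY (μ : Measure RWord) {f : RWord → RWord} (hf : Measurable f) :
    (muY μ).map (Prod.map (· + 1) f) = muY ((3 : ℝ≥0∞) • μ.map f) := by
  have hg : Measurable (Prod.map (· + 1 : ℤ → ℤ) f) := (measurable_of_countable _).prodMap hf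
  rw [muY, Measure.map_sum hg.aemeasurable, muY]
  conv_rhs => rw [← Measure.sum_comp_equiv (Equiv.addRight 1)]
  congr 1
  funext n
  have hweight : (3 : ℝ≥0∞) ^ (-(n + 1)) * 3 = 3 ^ (-n) := by
    rw [neg_add, ENNReal.zpow_add (by norm_num) (by norm_num), zpow_neg_one, mul_assoc,
      ENNReal.inv_mul_cancel (by norm_num) (by norm_num), mul_one]
  simp only [Function.comp_apply, Equiv.coe_addRight, Measure.map_smul, smul_smul, hweight,
    Measure.map_map hg measurable_prodMk_left, Measure.map_map measurable_prodMk_left hf]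
  rfl

lemma shiftS_of_head_eq_inv {s : Letter} {p : YSpace} (h : p.2.1 0 = s.inv) :
    shiftS s p = Prod.map (· + 1) tailWord p :=
  dif_pos h

lemma leftInverse_shiftS_inv (s : Letter) : Function.LeftInverse (shiftS s.inv) (shiftS s) := by
  rintro ⟨n, x⟩
  by_cases h : x.1 0 = s.inv
  · have h1 : x.1 1 ≠ s := by simpa [h] using x.2 0
    simp only [shiftS, h, tailWord, consWord, dif_pos, Letter.inv_inv, h1, dite_false,
      add_sub_cancel_right]
    refine congrArg (Prod.mk n) (Subtype.ext (funext fun m => ?_))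
    cases m
    · exact h.symm
    · rfl
  · simp only [shiftS, h, ↓reduceDIte, consWord, Letter.inv_inv, sub_add_cancel, tailWord]
    rfl

lemma bijective_shiftS (s : Letter) : Function.Bijective (shiftS s) := by
  refine Function.bijective_iff_has_inverse.2 ⟨shiftS s.inv, leftInverse_shiftS_inv s, ?_⟩
  have h := leftInverse_shiftS_inv s.inv
  rwa [Letter.inv_inv] at h

lemma measurable_shiftS (s : Letter) : Measurable (shiftS s) := by
  change Measurable fun p : YSpace => if h : p ∈ {p : YSpace | p.2.1 0 = s.inv}
    then (p.1 + 1, tailWord p.2) else (p.1 - 1, consWord s p.2 h)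
  refine Measurable.dite (s := {p : YSpace | p.2.1 0 = s.inv})
    (f := fun q => (q.1.1 + 1, tailWord q.1.2)) (g := fun q => (q.1.1 - 1, consWord s q.1.2 q.2))
    ?_ ?_ ?_
  · exact ((measurable_of_countable (· + 1 : ℤ → ℤ)).prodMap measurable_tailWord).comp
      measurable_subtype_coe
  · refine ((measurable_of_countable (· - 1 : ℤ → ℤ)).comp
      (measurable_fst.comp measurable_subtype_coe)).prodMk
      (Measurable.subtype_mk (measurable_pi_lambda _ fun m => ?_))
    cases m with
    | zero => exact measurable_const
    | succ m => exact (measurable_apply m).comp (measurable_snd.comp measurable_subtype_coe)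
  · exact measurable_snd (measurableSet_headSet s.inv)

lemma map_shiftS_restrict_headSet_inv {μ : Measure RWord} (hμ : IsMarkovMeasure μ)
    (s : Letter) :
    ((muY μ).restrict (Prod.snd ⁻¹' headSet s.inv)).map (shiftS s) =
      (muY μ).restrict (Prod.snd ⁻¹' (headSet s)ᶜ) := by
  rw [Measure.map_congr (ae_restrict_of_forall_mem (measurable_snd (measurableSet_headSet _))
      fun p hp => shiftS_of_head_eq_inv hp),
    restrict_muY_snd_preimage μ (measurableSet_headSet _),
    map_prodMap_add_one_muY _ measurable_tailWord, hμ.map_tailWord_restrict_headSet,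
    Letter.inv_inv, smul_smul, ENNReal.mul_inv_cancel (by norm_num) (by norm_num), one_smul,
    restrict_muY_snd_preimage μ (measurableSet_headSet s).compl]

lemma map_shiftS_restrict_compl_headSet_inv {μ : Measure RWord} (hμ : IsMarkovMeasure μ)
    (s : Letter) :
    ((muY μ).restrict (Prod.snd ⁻¹' headSet s.inv)ᶜ).map (shiftS s) =
      (muY μ).restrict (Prod.snd ⁻¹' headSet s) := by
  have h := map_shiftS_restrict_headSet_inv hμ s.inv
  have hinv := (leftInverse_shiftS_inv s.inv).comp_eq_id
  rw [Letter.inv_inv] at h hinv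
  rw [← Set.preimage_compl, ← h, Measure.map_map (measurable_shiftS s) (measurable_shiftS s.inv),
    hinv, Measure.map_id]

end Y

/-- The left-multiplication action of `F₂` on `Y = ⨆_{n∈ℤ} Y_n` with the measure
`μ_Y = Σ_n 3^{−n} μ_n` is measure-preserving: each generator shift `S_s` is an invertible
measure-preserving bijection of `Y`. -/
theorem shiftS_measurePreserving (μW : Measure RWord) (hμW : IsMarkovMeasure μW)
    (s : Letter) :
    MeasurePreserving (shiftS s) (muY μW) (muY μW) ∧
    Function.Bijective (shiftS s) := by
  refine ⟨⟨measurable_shiftS s, ?_⟩, bijective_shiftS s⟩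
  have hmeas (l : Letter) : MeasurableSet (Prod.snd ⁻¹' RWord.headSet l : Set YSpace) :=
    measurable_snd (RWord.measurableSet_headSet l)
  calc (muY μW).map (shiftS s)
      = ((muY μW).restrict (Prod.snd ⁻¹' RWord.headSet s.inv)).map (shiftS s)
        + ((muY μW).restrict (Prod.snd ⁻¹' RWord.headSet s.inv)ᶜ).map (shiftS s) := by
        rw [← Measure.map_add _ _ (measurable_shiftS s),
          Measure.restrict_add_restrict_compl (hmeas s.inv)]
    _ = (muY μW).restrict (Prod.snd ⁻¹' RWord.headSet s)ᶜ
        + (muY μW).restrict (Prod.snd ⁻¹' RWord.headSet s) := by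
        rw [map_shiftS_restrict_headSet_inv hμW, map_shiftS_restrict_compl_headSet_inv hμW,
          Set.preimage_compl]
    _ = muY μW := Measure.restrict_compl_add_restrict (hmeas s)
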